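/- arXiv:1809.04892 — 2 statements merged into one kernel-verified Lean document; each statement's English description precedes it below -/
import Mathlib

section
/- Let A_r ∈ ℝ^{2n×2n} be the real Jordan block with blocks D = [[c,-d],[d,c]] on the diagonal and I₂ on the block superdiagonal, with d ≠ 0. Let E_r(t) be the block-diagonal matrix with n copies of the rotation matrix [[cos(dt), sin(dt)],[-sin(dt), cos(dt)]]. Then E_r(t)·A_r·E_r(t)^{-1} + E_r'(t)·E_r(t)^{-1} equals the matrix J_n(c) ⊗ I₂, where J_n(c) is the n×n Jordan block with eigenvalue c and ⊗ denotes the Kronecker product. -/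
/-!
Both `E_r(t)` and `E_r'(t)` are `1 ⊗ R` with a 2×2 block, so conjugating by `E_r(t)` acts on the
second Kronecker factor only. The rotation `R = R(dt)` commutes with the rotation-scaling block
`D = [[c,-d],[d,c]]`, so `R D Rᵀ = D`, while `R' Rᵀ = [[0,d],[-d,0]]` cancels the skew part of `D`,
leaving `c • 1`; the nilpotent part `N ⊗ 1` is untouched.
-/

open Matrix Kronecker

namespace Matrix

theorem one_kronecker_mul_kronecker_mul_one_kronecker {R m n : Type*} [CommSemiring R]
    [Fintype m] [Fintype n] [DecidableEq n] (P B Q : Matrix m m R) (A : Matrix n n R) :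
    (1 ⊗ₖ P) * (A ⊗ₖ B) * (1 ⊗ₖ Q) = A ⊗ₖ (P * B * Q) := by
  rw [← mul_kronecker_mul, ← mul_kronecker_mul, Matrix.one_mul, Matrix.mul_one]

noncomputable def rotationMatrix (θ : ℝ) : Matrix (Fin 2) (Fin 2) ℝ :=
  !![Real.cos θ, Real.sin θ; -Real.sin θ, Real.cos θ]

theorem rotationMatrix_mul_transpose (θ : ℝ) : rotationMatrix θ * (rotationMatrix θ)ᵀ = 1 := by
  ext i j
  fin_cases i <;> fin_cases j <;>
    simp [rotationMatrix, mul_apply, Fin.sum_univ_two] <;>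
    first
    | linear_combination Real.sin_sq_add_cos_sq θ
    | linear_combination

theorem rotationMatrix_commute (θ c d : ℝ) : Commute (rotationMatrix θ) !![c, -d; d, c] := by
  ext i j
  fin_cases i <;> fin_cases j <;> simp [rotationMatrix, mul_apply, Fin.sum_univ_two] <;> ring

theorem hasDerivAt_rotationMatrix_apply (d t : ℝ) (i j : Fin 2) :
    HasDerivAt (fun s => rotationMatrix (d * s) i j)
      ((d • !![-Real.sin (d * t), Real.cos (d * t); -Real.cos (d * t), -Real.sin (d * t)]) i j)
      t := by
  have hlin : HasDerivAt (fun s : ℝ => d * s) d t := by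
    simpa using (hasDerivAt_id t).const_mul d
  fin_cases i <;> fin_cases j <;> simp only [rotationMatrix]
  · simpa [mul_comm] using hlin.cos
  · simpa [mul_comm] using hlin.sin
  · simpa [mul_comm] using hlin.sin.fun_neg
  · simpa [mul_comm] using hlin.cos

theorem rotationMatrix_deriv_mul_transpose (θ d : ℝ) :
    (d • !![-Real.sin θ, Real.cos θ; -Real.cos θ, -Real.sin θ]) * (rotationMatrix θ)ᵀ =
      !![0, d; -d, 0] := by
  ext i j
  fin_cases i <;> fin_cases j <;>
    simp [rotationMatrix, mul_apply, Fin.sum_univ_two] <;>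
    first
    | linear_combination d * Real.sin_sq_add_cos_sq θ
    | linear_combination -d * Real.sin_sq_add_cos_sq θ
    | linear_combination

end Matrix

theorem rotation_conjugation_real_jordan_block_general (n : ℕ) (c d t : ℝ)
    (N : Matrix (Fin n) (Fin n) ℝ)
    (rot rot' : Matrix (Fin 2) (Fin 2) ℝ)
    (hrot : rot = !![Real.cos (d * t), Real.sin (d * t);
                     -Real.sin (d * t), Real.cos (d * t)])
    (hrot' : ∀ i j : Fin 2,
      HasDerivAt
        (fun s => (!![Real.cos (d * s), Real.sin (d * s);
                      -Real.sin (d * s), Real.cos (d * s)] : Matrix (Fin 2) (Fin 2) ℝ) i j)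
        (rot' i j) t)
    (Ar Er Er' : Matrix (Fin n × Fin 2) (Fin n × Fin 2) ℝ)
    (hAr : Ar = kroneckerMap (· * ·) (1 : Matrix (Fin n) (Fin n) ℝ) !![c, -d; d, c]
                + kroneckerMap (· * ·) N (1 : Matrix (Fin 2) (Fin 2) ℝ))
    (hEr : Er = kroneckerMap (· * ·) (1 : Matrix (Fin n) (Fin n) ℝ) rot)
    (hEr' : Er' = kroneckerMap (· * ·) (1 : Matrix (Fin n) (Fin n) ℝ) rot') :
    Er * Ar * Er⁻¹ + Er' * Er⁻¹ =
      kroneckerMap (· * ·) (c • (1 : Matrix (Fin n) (Fin n) ℝ) + N)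
        (1 : Matrix (Fin 2) (Fin 2) ℝ) := by
  change rot = rotationMatrix (d * t) at hrot
  have hrot'_eq : rot' = d • !![-Real.sin (d * t), Real.cos (d * t);
      -Real.cos (d * t), -Real.sin (d * t)] :=
    ext fun i j => (hrot' i j).unique (hasDerivAt_rotationMatrix_apply d t i j)
  have hEr_inv : Er⁻¹ = 1 ⊗ₖ rotᵀ := by
    rw [hEr, hrot]
    rw [inv_kronecker, inv_one, inv_eq_right_inv (rotationMatrix_mul_transpose _)]
  have hconj : rot * !![c, -d; d, c] * rotᵀ = !![c, -d; d, c] := by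
    rw [hrot, (rotationMatrix_commute _ c d).eq, Matrix.mul_assoc, rotationMatrix_mul_transpose,
      Matrix.mul_one]
  have hrot_unit : rot * 1 * rotᵀ = 1 := by
    rw [Matrix.mul_one, hrot, rotationMatrix_mul_transpose]
  have hrot'_mul : rot' * rotᵀ = !![0, d; -d, 0] := by
    rw [hrot'_eq, hrot, rotationMatrix_deriv_mul_transpose]
  have hsum : !![c, -d; d, c] + !![0, d; -d, 0] = c • (1 : Matrix (Fin 2) (Fin 2) ℝ) := by
    ext i j; fin_cases i <;> fin_cases j <;> simp
  rw [hEr_inv, hAr, hEr, hEr', Matrix.mul_add, Matrix.add_mul,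
    one_kronecker_mul_kronecker_mul_one_kronecker, one_kronecker_mul_kronecker_mul_one_kronecker,
    ← mul_kronecker_mul, hconj, hrot_unit, hrot'_mul, Matrix.one_mul, add_right_comm,
    ← kronecker_add, hsum, add_kronecker, smul_kronecker, kronecker_smul]

theorem rotation_conjugation_real_jordan_block (n : ℕ) (c d t : ℝ) (hd : d ≠ 0)
    (N : Matrix (Fin n) (Fin n) ℝ)
    (hN : ∀ i j : Fin n, N i j = if (i : ℕ) + 1 = (j : ℕ) then 1 else 0)
    (rot rot' : Matrix (Fin 2) (Fin 2) ℝ)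
    (hrot : rot = !![Real.cos (d * t), Real.sin (d * t);
                     -Real.sin (d * t), Real.cos (d * t)])
    (hrot' : ∀ i j : Fin 2,
      HasDerivAt
        (fun s => (!![Real.cos (d * s), Real.sin (d * s);
                      -Real.sin (d * s), Real.cos (d * s)] : Matrix (Fin 2) (Fin 2) ℝ) i j)
        (rot' i j) t)
    (Ar Er Er' : Matrix (Fin n × Fin 2) (Fin n × Fin 2) ℝ)
    (hAr : Ar = kroneckerMap (· * ·) (1 : Matrix (Fin n) (Fin n) ℝ) !![c, -d; d, c]
                + kroneckerMap (· * ·) N (1 : Matrix (Fin 2) (Fin 2) ℝ))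
    (hEr : Er = kroneckerMap (· * ·) (1 : Matrix (Fin n) (Fin n) ℝ) rot)
    (hEr' : Er' = kroneckerMap (· * ·) (1 : Matrix (Fin n) (Fin n) ℝ) rot') :
    Er * Ar * Er⁻¹ + Er' * Er⁻¹ =
      kroneckerMap (· * ·) (c • (1 : Matrix (Fin n) (Fin n) ℝ) + N)
        (1 : Matrix (Fin 2) (Fin 2) ℝ) :=
  rotation_conjugation_real_jordan_block_general n c d t N rot rot' hrot hrot' Ar Er Er' hAr hEr
    hEr'
end

section
/- Let c ≥ 0, Δ > 0, T > 1, τ_D > 0 with 1/T + Δ/τ_D < 1. Let (R(z_k))_{k≥0} be a sequence of nonnegative reals (possibly non-constant) whose running average R̄_m := (R(z_0) + ... + R(z_{m-1}))/m satisfies R̄_m > c·Δ·log₂(e)/(1 - 1/T - Δ/τ_D) uniformly, i.e., there is ε > 0 with R̄_m ≥ c·Δ·log₂(e)/(1 - 1/T - Δ/τ_D) + ε for all m ≥ 1. Suppose also T_S(z_0, z_m) = m ≥ ((1-1/T-Δ/τ_D)/Δ)(z_m - z_0) - (κ+ηΔ)/Δ. Then e^{c(z_m - z_0)} / ∏_{k=1}^{m}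 2^{R(z_{k-1})} → 0 as z_m - z_0 → ∞. -/
/-!
Taking logarithms, the ratio is `exp (c (z m - z 0) - log 2 · ∑_{k<m} R k)`. The bound on
`T_S` says that the elapsed time `z m - z 0` grows at most like `(Δ m + κ + η Δ) / D`, with
`D = 1 - 1/T - Δ/τ_D > 0`, so the numerator contributes at most `c Δ m / D + O(1)` to the
exponent; the average-rate hypothesis says the denominator contributes at least
`(c Δ / D + ε log 2) m`. The exponent is therefore bounded by `O(1) - ε log 2 · m → -∞`.
-/

open Filter

lemma tendsto_atBot_of_eventually_le_const_sub_mul {f : ℕ → ℝ} {A δ : ℝ} (hδ : 0 < δ)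
    (hf : ∀ᶠ m in atTop, f m ≤ A - δ * m) : Tendsto f atTop atBot := by
  refine tendsto_atBot_mono' atTop hf ?_
  simp_rw [sub_eq_add_neg]
  exact tendsto_atBot_add_const_left atTop A
    (tendsto_neg_atTop_atBot.comp (tendsto_natCast_atTop_atTop.const_mul_atTop hδ))

lemma le_div_of_div_mul_sub_div_le {D Δ K x m : ℝ} (hD : 0 < D) (hΔ : 0 < Δ)
    (h : D / Δ * x - K / Δ ≤ m) : x ≤ (Δ * m + K) / D := by
  rw [div_mul_eq_mul_div, ← sub_div, div_le_iff₀ hΔ] at h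
  rw [le_div_iff₀ hD]
  linarith

lemma Real.exp_div_prod_rpow {ι : Type*} {b : ℝ} (hb : 0 < b) (a : ℝ) (s : Finset ι)
    (f : ι → ℝ) : Real.exp a / ∏ k ∈ s, b ^ f k = Real.exp (a - Real.log b * ∑ k ∈ s, f k) := by
  rw [← Real.rpow_sum_of_pos hb, Real.rpow_def_of_pos hb, Real.exp_sub]

theorem average_data_rate_decay_general
    (c Δ T τD κ η ε : ℝ) (hc : 0 ≤ c) (hΔ : 0 < Δ) (hε : 0 < ε)
    (hcond : 1 / T + Δ / τD < 1)
    (R : ℕ → ℝ)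
    -- the running average bit rate exceeds the threshold uniformly
    (havg : ∀ m : ℕ, 1 ≤ m →
      (∑ k ∈ Finset.range m, R k) / (m : ℝ) ≥
        c * Δ * (Real.log 2)⁻¹ / (1 - 1 / T - Δ / τD) + ε)
    (z : ℕ → ℝ)
    -- T_S(z_0, z_m) = m together with Lemma 2
    (hTS : ∀ m : ℕ, (m : ℝ) ≥ ((1 - 1 / T - Δ / τD) / Δ) * (z m - z 0) - (κ + η * Δ) / Δ) :
    Tendsto
      (fun m => Real.exp (c * (z m - z 0)) / ∏ k ∈ Finset.range m, (2 : ℝ) ^ (R k))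
      atTop (nhds 0) := by
  set D := 1 - 1 / T - Δ / τD
  have hD : 0 < D := by linarith
  have hlog2 : 0 < Real.log 2 := Real.log_pos one_lt_two
  have hexponent : Tendsto (fun m : ℕ =>
      c * (z m - z 0) - Real.log 2 * ∑ k ∈ Finset.range m, R k) atTop atBot := by
    refine tendsto_atBot_of_eventually_le_const_sub_mul (A := c * (κ + η * Δ) / D)
      (mul_pos hε hlog2) ?_
    filter_upwards [eventually_ge_atTop 1] with m hm
    have helapsed := le_div_of_div_mul_sub_div_le hD hΔ (hTS m)
    have hrate := (le_div_iff₀ (by positivity : (0 : ℝ) < m)).mp (havg m hm)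
    calc c * (z m - z 0) - Real.log 2 * ∑ k ∈ Finset.range m, R k
        ≤ c * ((Δ * m + (κ + η * Δ)) / D)
            - Real.log 2 * ((c * Δ * (Real.log 2)⁻¹ / D + ε) * m) := by gcongr
      _ = c * (κ + η * Δ) / D - ε * Real.log 2 * m := by field_simp; ring
  simpa only [Real.exp_div_prod_rpow two_pos, Function.comp_def] using Real.tendsto_exp_atBot.comp hexponent

theorem average_data_rate_decay
    (c Δ T τD κ η ε : ℝ) (hc : 0 ≤ c) (hΔ : 0 < Δ) (hT : 1 < T) (hτD : 0 < τD)
    (hκ : 0 ≤ κ) (hη : 0 ≤ η) (hε : 0 < ε)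
    (hcond : 1 / T + Δ / τD < 1)
    (R : ℕ → ℝ) (hRpos : ∀ k, 0 ≤ R k)
    -- the running average bit rate exceeds the threshold uniformly
    (havg : ∀ m : ℕ, 1 ≤ m →
      (∑ k ∈ Finset.range m, R k) / (m : ℝ) ≥
        c * Δ * (Real.log 2)⁻¹ / (1 - 1 / T - Δ / τD) + ε)
    (z : ℕ → ℝ) (hmono : StrictMono z)
    -- T_S(z_0, z_m) = m together with Lemma 2
    (hTS : ∀ m : ℕ, (m : ℝ) ≥ ((1 - 1 / T - Δ / τD) / Δ) * (z m - z 0) - (κ + η * Δ) / Δ)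
    (hzt : Tendsto (fun m => z m - z 0) atTop atTop) :
    Tendsto
      (fun m => Real.exp (c * (z m - z 0)) / ∏ k ∈ Finset.range m, (2 : ℝ) ^ (R k))
      atTop (nhds 0) :=
  average_data_rate_decay_general c Δ T τD κ η ε hc hΔ hε hcond R havg z hTS
end
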